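/- Fix n ≥ 4 and 2 ≤ k ≤ n/4. Consider a multiset population R of bit strings containing at least one element of S_I* = {x : k ≤ |x|₁ ≤ n-k}. Then every element of R whose number of one-bits lies in [1..k-1] ∪ [n-k+1..n-1] is strictly dominated (under maximization of OneJumpZeroJump_{n,k}) by some element of R; consequently all non-dominated (rank-1) elements of R lie in the Pareto set S*. -/
import Mathlib


/-- Number of one-bits of a bit string. -/
def onesCount {n : ℕ} (x : Fin n → Bool) : ℕ :=
  (Finset.univ.filter (fun i => x i = true)).card

/-- Number of zero-bits of a bit string. -/
def zerosCount {n : ℕ} (x : Fin n → Bool) : ℕ :=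
  (Finset.univ.filter (fun i => x i = false)).card

/-- First objective of OneJumpZeroJump_{n,k}. -/
def ojzjF1 (n k : ℕ) (x : Fin n → Bool) : ℤ :=
  if onesCount x ≤ n - k ∨ x = (fun _ => true) then (k : ℤ) + onesCount x
  else (n : ℤ) - onesCount x

/-- Second objective of OneJumpZeroJump_{n,k}. -/
def ojzjF2 (n k : ℕ) (x : Fin n → Bool) : ℤ :=
  if zerosCount x ≤ n - k ∨ x = (fun _ => false) then (k : ℤ) + zerosCount x
  else (n : ℤ) - zerosCount x

/-- `x` strictly dominates `y` (maximization). -/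
def strictDom (n k : ℕ) (x y : Fin n → Bool) : Prop :=
  ojzjF1 n k y ≤ ojzjF1 n k x ∧ ojzjF2 n k y ≤ ojzjF2 n k x ∧
    (ojzjF1 n k y < ojzjF1 n k x ∨ ojzjF2 n k y < ojzjF2 n k x)


lemma onesCount_le {n : ℕ} (x : Fin n → Bool) : onesCount x ≤ n := by
  classical
  exact le_trans (Finset.card_filter_le _ _) (by simp)

lemma ones_add_zeros {n : ℕ} (x : Fin n → Bool) : onesCount x + zerosCount x = n := by
  classical
  have := Finset.card_filter_add_card_filter_not
    (s := (Finset.univ : Finset (Fin n))) (p := fun i => x i = true)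
  simpa [onesCount, zerosCount, Bool.not_eq_true] using this

lemma onesCount_allTrue {n : ℕ} : onesCount (fun _ : Fin n => true) = n := by
  simp [onesCount]

lemma onesCount_allFalse {n : ℕ} : onesCount (fun _ : Fin n => false) = 0 := by
  simp [onesCount]

lemma gap_dominated (n k : ℕ) (hn : 4 ≤ n) (hk2 : 2 ≤ k) (hk : 4 * k ≤ n)
    (z y : Fin n → Bool) (hz1 : k ≤ onesCount z) (hz2 : onesCount z ≤ n - k)
    (hy : (1 ≤ onesCount y ∧ onesCount y ≤ k - 1) ∨
          (n - k + 1 ≤ onesCount y ∧ onesCount y ≤ n - 1)) :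
    strictDom n k z y := by
  have hozn := onesCount_le z
  have hoyn := onesCount_le y
  have hzz := ones_add_zeros z
  have hzy := ones_add_zeros y
  have hynt : y ≠ (fun _ => true) := by
    intro h; rw [h, onesCount_allTrue] at hy; omega
  have hynf : y ≠ (fun _ => false) := by
    intro h; rw [h, onesCount_allFalse] at hy; omega
  have hf1z : ojzjF1 n k z = (k : ℤ) + onesCount z := by
    rw [ojzjF1, if_pos (Or.inl (by omega))]
  have hf2z : ojzjF2 n k z = (k : ℤ) + zerosCount z := by
    rw [ojzjF2, if_pos (Or.inl (by omega))]
  rcases hy with ⟨h1, h2⟩ | ⟨h1, h2⟩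
  · have hf1y : ojzjF1 n k y = (k : ℤ) + onesCount y := by
      rw [ojzjF1, if_pos (Or.inl (by omega))]
    have hf2y : ojzjF2 n k y = (n : ℤ) - zerosCount y := by
      rw [ojzjF2, if_neg]; push_neg; exact ⟨by omega, hynf⟩
    refine ⟨?_, ?_, Or.inl ?_⟩ <;> simp only [hf1z, hf2z, hf1y, hf2y] <;> omega
  · have hf1y : ojzjF1 n k y = (n : ℤ) - onesCount y := by
      rw [ojzjF1, if_neg]; push_neg; exact ⟨by omega, hynt⟩
    have hf2y : ojzjF2 n k y = (k : ℤ) + zerosCount y := by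
      rw [ojzjF2, if_pos (Or.inl (by omega))]
    refine ⟨?_, ?_, Or.inl ?_⟩ <;> simp only [hf1z, hf2z, hf1y, hf2y] <;> omega

/-- In a population containing an inner Pareto-set element, every gap individual
is strictly dominated by some population member, so all non-dominated
individuals lie in the Pareto set `S*`. -/
theorem stmt_8 (n k : ℕ) (hn : 4 ≤ n) (hk2 : 2 ≤ k) (hk : 4 * k ≤ n)
    (R : Multiset (Fin n → Bool))
    (hR : ∃ z ∈ R, k ≤ onesCount z ∧ onesCount z ≤ n - k) :
    (∀ y ∈ R,
        ((1 ≤ onesCount y ∧ onesCount y ≤ k - 1) ∨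
         (n - k + 1 ≤ onesCount y ∧ onesCount y ≤ n - 1)) →
        ∃ x ∈ R, strictDom n k x y) ∧
      (∀ y ∈ R, (¬ ∃ x ∈ R, strictDom n k x y) →
        (k ≤ onesCount y ∧ onesCount y ≤ n - k) ∨ onesCount y = 0 ∨ onesCount y = n) := by
  obtain ⟨z, hzR, hz1, hz2⟩ := hR
  constructor
  · intro y hyR hy
    exact ⟨z, hzR, gap_dominated n k hn hk2 hk z y hz1 hz2 hy⟩
  · intro y hyR hnd
    by_contra hcon
    push_neg at hcon
    have hoyn := onesCount_le y
    have hy : (1 ≤ onesCount y ∧ onesCount y ≤ k - 1) ∨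
        (n - k + 1 ≤ onesCount y ∧ onesCount y ≤ n - 1) := by omega
    exact hnd ⟨z, hzR, gap_dominated n k hn hk2 hk z y hz1 hz2 hy⟩
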